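/- arXiv:math/0601427 — 4 statements merged into one kernel-verified Lean document; each statement's English description precedes it below -/
import Mathlib

section
/- Quantitative core of Theorem 1 (triple exponential bound): Let 0 ≤ T₀ < T⋆ ≤ ∞ and let Ω : [T₀, T⋆) → ℝ be continuous and nondecreasing with Ω(T₀) ≥ e^{e^e}. Suppose there exist constants R > 1, K > 0 and c_L > 0 such that for all T₀ ≤ t₀ < t₁ < T⋆ there exists λ₀ > 0 satisfying (i) λ₀ ≥ c_L · Ω(t₀) / (R · Ω(t₁) · log log Ω(t₁)), and (ii) Ω(t) ≤ R · Ω(t₀) · ( 1 + (K/λ₀) · ∫_{t₀}^{t} (log Ω(τ) + 1) dτ ) for every t ∈ [t₀, t₁]. Then there exist constants C₁, C₂ > 0, depending only on R, K, c_L, T₀ and Ω(T₀), such that log log log Ω(t) ≤ C₁ t + C₂ for all t ∈ [T₀, T⋆). In particular, if T⋆ < ∞ then Ω is bounded on [T₀, T⋆). -/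
open Real

private lemma qg_two_le_e : (2:ℝ) ≤ Real.exp 1 := by
  linarith [Real.add_one_le_exp 1]

private lemma qg_gap (A C₁ y : ℝ) (hA : 0 < A) (hC₁ : 0 < C₁) (hy1 : 1 ≤ y)
    (hyC : C₁ / A ≤ y) :
    C₁ / (2 * A * Real.exp 1 ^ 2) ≤
      Real.exp (Real.exp y) -
        Real.exp (Real.exp (y - C₁ / (A * (Real.exp y * (Real.exp (Real.exp y) + 1))))) := by
  set Q := Real.exp y with hQdef
  set P := Real.exp Q with hPdef
  set ε := C₁ / (A * (Q * (P + 1))) with hεdef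
  set z := C₁ / (A * (P + 1)) with hzdef
  have hQpos : 0 < Q := Real.exp_pos y
  have hPpos : 0 < P := Real.exp_pos Q
  have hQ1 : 1 ≤ Q := Real.one_le_exp (by linarith)
  have hP1 : 1 ≤ P := Real.one_le_exp (by linarith)
  have hyQ : y ≤ Q := by have := Real.add_one_le_exp y; linarith
  have hQP : Q ≤ P := by have := Real.add_one_le_exp Q; linarith
  have hC₁Ay : C₁ ≤ A * y := by
    have := (div_le_iff₀ hA).mp hyC
    linarith [this]
  have hz_pos : 0 < z := by positivity
  have hz1 : z ≤ 1 := by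
    rw [hzdef, div_le_one (by positivity)]
    nlinarith
  have hεz : ε * Q = z := by
    rw [hεdef, hzdef]
    field_simp
  have hεpos : 0 < ε := by positivity
  have hε1 : ε ≤ 1 := by nlinarith
  have hsplit : Real.exp (y - ε) = Q * Real.exp (-ε) := by
    rw [hQdef, ← Real.exp_add]; ring_nf
  have hlow : Q - z ≤ Real.exp (y - ε) := by
    have h1 : 1 - ε ≤ Real.exp (-ε) := by have := Real.add_one_le_exp (-ε); linarith
    rw [hsplit]; nlinarith
  have hgap : z / 2 ≤ Q - Real.exp (y - ε) := by
    have h2 : Real.exp (-ε) * (1 + ε) ≤ 1 := by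
      have h3 := Real.add_one_le_exp ε
      have h4 : Real.exp (-ε) * Real.exp ε = 1 := by
        rw [← Real.exp_add]; simp
      nlinarith [Real.exp_pos (-ε)]
    rw [hsplit]
    nlinarith [Real.exp_pos (-ε)]
  have hE2low : P * Real.exp (-1) ≤ Real.exp (Real.exp (y - ε)) := by
    have h7 : Q - 1 ≤ Real.exp (y - ε) := by linarith
    calc P * Real.exp (-1) = Real.exp (Q - 1) := by rw [hPdef, ← Real.exp_add]; ring_nf
    _ ≤ Real.exp (Real.exp (y - ε)) := Real.exp_le_exp.mpr h7
  have hmain : Real.exp (Real.exp (y - ε)) * (Q - Real.exp (y - ε)) ≤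
      P - Real.exp (Real.exp (y - ε)) := by
    have h5 := Real.add_one_le_exp (Q - Real.exp (y - ε))
    have h6 : Real.exp (Real.exp (y - ε)) * Real.exp (Q - Real.exp (y - ε)) = P := by
      rw [hPdef, ← Real.exp_add]; ring_nf
    nlinarith [Real.exp_pos (Real.exp (y - ε))]
  have hprod : P * Real.exp (-1) * (z / 2) ≤
      Real.exp (Real.exp (y - ε)) * (Q - Real.exp (y - ε)) :=
    mul_le_mul hE2low hgap (by positivity) (le_trans (by positivity) hE2low)
  have hfe : P * Real.exp (-1) * (z / 2) = P * C₁ / (2 * Real.exp 1 * A * (P + 1)) := by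
    rw [hzdef, Real.exp_neg]
    field_simp
  have hfinal : C₁ / (2 * A * Real.exp 1 ^ 2) ≤ P * Real.exp (-1) * (z / 2) := by
    rw [hfe, div_le_div_iff₀ (by positivity) (by positivity)]
    have he2 : (2:ℝ) ≤ Real.exp 1 := qg_two_le_e
    have hPe : P + 1 ≤ P * Real.exp 1 := by nlinarith
    have h8 := mul_le_mul_of_nonneg_left hPe
      (by positivity : (0:ℝ) ≤ 2 * A * C₁ * Real.exp 1)
    ring_nf at h8 ⊢
    linarith [h8]
  linarith

open MeasureTheory Topology Filter

set_option maxHeartbeats 2000000 in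
/-- Quantitative core of Theorem 1 (triple exponential bound). -/
theorem qg_triple_exponential_bound
    (T₀ : ℝ) (Tstar : EReal) (hT₀ : 0 ≤ T₀) (hTT : (T₀ : EReal) < Tstar)
    (Ω : ℝ → ℝ)
    (hcont : ContinuousOn Ω {t : ℝ | T₀ ≤ t ∧ (t : EReal) < Tstar})
    (hmono : ∀ s t : ℝ, T₀ ≤ s → s ≤ t → (t : EReal) < Tstar → Ω s ≤ Ω t)
    (hbig : Real.exp (Real.exp (Real.exp 1)) ≤ Ω T₀)
    (R K cL : ℝ) (hR : 1 < R) (hK : 0 < K) (hcL : 0 < cL)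
    (hyp : ∀ t₀ t₁ : ℝ, T₀ ≤ t₀ → t₀ < t₁ → (t₁ : EReal) < Tstar →
      ∃ lam₀ > 0,
        cL * Ω t₀ / (R * Ω t₁ * Real.log (Real.log (Ω t₁))) ≤ lam₀ ∧
        ∀ t ∈ Set.Icc t₀ t₁,
          Ω t ≤ R * Ω t₀ *
            (1 + (K / lam₀) * ∫ τ in t₀..t, (Real.log (Ω τ) + 1))) :
    (∃ C₁ > 0, ∃ C₂ > 0, ∀ t : ℝ, T₀ ≤ t → (t : EReal) < Tstar →
        Real.log (Real.log (Real.log (Ω t))) ≤ C₁ * t + C₂) ∧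
    (Tstar < ⊤ → ∃ M : ℝ, ∀ t : ℝ, T₀ ≤ t → (t : EReal) < Tstar → Ω t ≤ M) := by
  have hEpos : (0:ℝ) < Real.exp (Real.exp (Real.exp 1)) := Real.exp_pos _
  have hR0 : (0:ℝ) < R := lt_trans one_pos hR
  have hΩT₀ : 0 < Ω T₀ := lt_of_lt_of_le hEpos hbig
  have hΩlb : ∀ t, T₀ ≤ t → (t:EReal) < Tstar → Real.exp (Real.exp (Real.exp 1)) ≤ Ω t :=
    fun t ht hlt => hbig.trans (hmono T₀ t le_rfl ht hlt)
  set A := 2 * K * R ^ 2 / cL with hAdef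
  have hA : 0 < A := by positivity
  have hlog2R : 0 < Real.log (2 * R) := Real.log_pos (by linarith)
  set C₁ := 2 * A * Real.exp 1 ^ 2 * (Real.log (2 * R) + 1) with hC₁def
  have hC₁ : 0 < C₁ := by
    apply mul_pos (by positivity) (by linarith)
  set C₂ := max (C₁ / A + 1) (Real.log (Real.log (Real.log (2 * R * Ω T₀))) + 1) with hC₂def
  have hC₂1 : 1 ≤ C₂ := le_trans (by nlinarith [div_pos hC₁ hA]) (le_max_left _ _)
  have hC₂A : C₁ / A ≤ C₂ := le_trans (by linarith) (le_max_left _ _)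
  -- 2 R Ω T₀ < exp³ C₂
  have hC₂big : 2 * R * Ω T₀ < Real.exp (Real.exp (Real.exp C₂)) := by
    set x := 2 * R * Ω T₀ with hxdef
    have hxE : Real.exp (Real.exp (Real.exp 1)) ≤ x := by nlinarith
    have hxpos : 0 < x := lt_of_lt_of_le hEpos hxE
    have hlx : Real.exp (Real.exp 1) ≤ Real.log x := by
      calc Real.exp (Real.exp 1) = Real.log (Real.exp (Real.exp (Real.exp 1))) :=
        (Real.log_exp _).symm
      _ ≤ Real.log x := Real.log_le_log hEpos hxE
    have hlxpos : 0 < Real.log x := lt_of_lt_of_le (Real.exp_pos _) hlx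
    have hllx : Real.exp 1 ≤ Real.log (Real.log x) := by
      calc Real.exp 1 = Real.log (Real.exp (Real.exp 1)) := (Real.log_exp _).symm
      _ ≤ Real.log (Real.log x) := Real.log_le_log (Real.exp_pos _) hlx
    have hllxpos : 0 < Real.log (Real.log x) := lt_of_lt_of_le (Real.exp_pos _) hllx
    have hxeq : Real.exp (Real.exp (Real.exp (Real.log (Real.log (Real.log x))))) = x := by
      rw [Real.exp_log hllxpos, Real.exp_log hlxpos, Real.exp_log hxpos]
    have hlt : Real.log (Real.log (Real.log x)) < C₂ :=
      lt_of_lt_of_le (by linarith) (le_max_right _ _)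
    calc x = Real.exp (Real.exp (Real.exp (Real.log (Real.log (Real.log x))))) := hxeq.symm
    _ < Real.exp (Real.exp (Real.exp C₂)) := by
        exact Real.exp_lt_exp.mpr (Real.exp_lt_exp.mpr (Real.exp_lt_exp.mpr hlt))
  -- Key lemma
  have key : ∀ t₀ t₁ : ℝ, T₀ ≤ t₀ → t₀ < t₁ → (t₁ : EReal) < Tstar →
      (t₁ - t₀) * (A * (Real.log (Real.log (Ω t₁)) * (Real.log (Ω t₁) + 1))) ≤ 1 →
      Ω t₁ ≤ 2 * R * Ω t₀ := by
    intro t₀ t₁ ht₀ hlt hts hD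
    obtain ⟨lam₀, hlam_pos, hlam_lb, hbound⟩ := hyp t₀ t₁ ht₀ hlt hts
    have ht₀star : (t₀ : EReal) < Tstar := lt_trans (by exact_mod_cast hlt) hts
    have hΩ₀ := hΩlb t₀ ht₀ ht₀star
    have hΩ₁ := hΩlb t₁ (ht₀.trans hlt.le) hts
    have hΩ₀pos : 0 < Ω t₀ := lt_of_lt_of_le hEpos hΩ₀
    have hΩ₁pos : 0 < Ω t₁ := lt_of_lt_of_le hEpos hΩ₁
    set L1 := Real.log (Ω t₁) with hL1def
    set L2 := Real.log (Real.log (Ω t₁)) with hL2def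
    have hL1 : Real.exp (Real.exp 1) ≤ L1 := by
      calc Real.exp (Real.exp 1) = Real.log (Real.exp (Real.exp (Real.exp 1))) :=
        (Real.log_exp _).symm
      _ ≤ L1 := Real.log_le_log hEpos hΩ₁
    have hL1pos : 0 < L1 := lt_of_lt_of_le (Real.exp_pos _) hL1
    have hL2 : Real.exp 1 ≤ L2 := by
      calc Real.exp 1 = Real.log (Real.exp (Real.exp 1)) := (Real.log_exp _).symm
      _ ≤ L2 := Real.log_le_log (Real.exp_pos _) hL1
    have hL2pos : 0 < L2 := lt_of_lt_of_le (Real.exp_pos _) hL2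
    have hsub : Set.Icc t₀ t₁ ⊆ {t : ℝ | T₀ ≤ t ∧ (t:EReal) < Tstar} := by
      intro x hx
      exact ⟨ht₀.trans hx.1, lt_of_le_of_lt (by exact_mod_cast hx.2) hts⟩
    have hcont' : ContinuousOn (fun τ => Real.log (Ω τ) + 1) (Set.Icc t₀ t₁) := by
      apply ContinuousOn.add _ continuousOn_const
      apply ContinuousOn.log (hcont.mono hsub)
      intro x hx
      have := hΩlb x (ht₀.trans hx.1) (lt_of_le_of_lt (by exact_mod_cast hx.2) hts)
      exact ne_of_gt (lt_of_lt_of_le hEpos this)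
    have hint : IntervalIntegrable (fun τ => Real.log (Ω τ) + 1) volume t₀ t₁ := by
      apply ContinuousOn.intervalIntegrable
      rwa [Set.uIcc_of_le hlt.le]
    have hIle : (∫ τ in t₀..t₁, (Real.log (Ω τ) + 1)) ≤ (t₁ - t₀) * (L1 + 1) := by
      have h := intervalIntegral.integral_mono_on hlt.le hint
        (intervalIntegrable_const (c := L1 + 1)) (fun x hx => ?_)
      · rw [intervalIntegral.integral_const, smul_eq_mul] at h
        exact h
      · have hxpos : 0 < Ω x :=
          lt_of_lt_of_le hEpos (hΩlb x (ht₀.trans hx.1)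
            (lt_of_le_of_lt (by exact_mod_cast hx.2) hts))
        have hx1 : Ω x ≤ Ω t₁ := hmono x t₁ (ht₀.trans hx.1) hx.2 hts
        have : Real.log (Ω x) ≤ L1 := Real.log_le_log hxpos hx1
        linarith
    have hb := hbound t₁ ⟨hlt.le, le_rfl⟩
    set I := ∫ τ in t₀..t₁, (Real.log (Ω τ) + 1) with hIdef
    have hlb_pos : 0 < cL * Ω t₀ / (R * Ω t₁ * L2) := by positivity
    have hKlam : K / lam₀ ≤ K * (R * Ω t₁ * L2) / (cL * Ω t₀) := by
      have h1 : K / lam₀ ≤ K / (cL * Ω t₀ / (R * Ω t₁ * L2)) :=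
        div_le_div_of_nonneg_left hK.le hlb_pos hlam_lb
      rwa [div_div_eq_mul_div] at h1
    have hKlam0 : 0 ≤ K / lam₀ := by positivity
    have hIle2 : (K / lam₀) * I ≤
        (K * (R * Ω t₁ * L2) / (cL * Ω t₀)) * ((t₁ - t₀) * (L1 + 1)) := by
      calc (K / lam₀) * I ≤ (K / lam₀) * ((t₁ - t₀) * (L1 + 1)) :=
        mul_le_mul_of_nonneg_left hIle hKlam0
      _ ≤ _ := mul_le_mul_of_nonneg_right hKlam (by nlinarith)
    have hRΩpos : 0 < R * Ω t₀ := mul_pos hR0 hΩ₀pos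
    have hmain2 : Ω t₁ ≤ R * Ω t₀ +
        R * Ω t₀ * ((K * (R * Ω t₁ * L2) / (cL * Ω t₀)) * ((t₁ - t₀) * (L1 + 1))) := by
      calc Ω t₁ ≤ R * Ω t₀ * (1 + (K / lam₀) * I) := hb
      _ ≤ R * Ω t₀ * (1 + (K * (R * Ω t₁ * L2) / (cL * Ω t₀)) * ((t₁ - t₀) * (L1 + 1))) :=
        mul_le_mul_of_nonneg_left (by linarith) hRΩpos.le
      _ = _ := by ring
    have hsecond : R * Ω t₀ * ((K * (R * Ω t₁ * L2) / (cL * Ω t₀)) * ((t₁ - t₀) * (L1 + 1)))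
        = (Ω t₁ / 2) * ((t₁ - t₀) * (A * (L2 * (L1 + 1)))) := by
      rw [hAdef]
      field_simp [hcL.ne', hΩ₀pos.ne']
    have h7 : (Ω t₁ / 2) * ((t₁ - t₀) * (A * (L2 * (L1 + 1)))) ≤ Ω t₁ / 2 := by
      calc (Ω t₁ / 2) * ((t₁ - t₀) * (A * (L2 * (L1 + 1)))) ≤ (Ω t₁ / 2) * 1 :=
        mul_le_mul_of_nonneg_left hD (by positivity)
      _ = Ω t₁ / 2 := mul_one _
    rw [hsecond] at hmain2
    linarith
  -- main comparison
  have hbound_all : ∀ t, T₀ ≤ t → (t : EReal) < Tstar →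
      Ω t ≤ Real.exp (Real.exp (Real.exp (C₁ * t + C₂))) := by
    intro tS htS hltS
    by_contra hcon
    push_neg at hcon
    set S := {t : ℝ | t ∈ Set.Icc T₀ tS ∧
      Real.exp (Real.exp (Real.exp (C₁ * t + C₂))) < Ω t} with hSdef
    have hSne : S.Nonempty := ⟨tS, ⟨htS, le_rfl⟩, hcon⟩
    have hSbdd : BddBelow S := ⟨T₀, fun x hx => hx.1.1⟩
    set τ := sInf S with hτdef
    have hIccsub : Set.Icc T₀ tS ⊆ {t : ℝ | T₀ ≤ t ∧ (t:EReal) < Tstar} := fun x hx =>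
      ⟨hx.1, lt_of_le_of_lt (by exact_mod_cast hx.2) hltS⟩
    have hGcont : Continuous fun t : ℝ => Real.exp (Real.exp (Real.exp (C₁ * t + C₂))) :=
      Real.continuous_exp.comp (Real.continuous_exp.comp (Real.continuous_exp.comp
        ((continuous_const.mul continuous_id).add continuous_const)))
    have hcontI : ContinuousOn
        (fun t => Ω t - Real.exp (Real.exp (Real.exp (C₁ * t + C₂)))) (Set.Icc T₀ tS) :=
      (hcont.mono hIccsub).sub hGcont.continuousOn
    have hCclosed : IsClosed (Set.Icc T₀ tS ∩
        (fun t => Ω t - Real.exp (Real.exp (Real.exp (C₁ * t + C₂)))) ⁻¹' Set.Ici 0) :=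
      hcontI.preimage_isClosed_of_isClosed isClosed_Icc isClosed_Ici
    have hSsub : S ⊆ Set.Icc T₀ tS ∩
        (fun t => Ω t - Real.exp (Real.exp (Real.exp (C₁ * t + C₂)))) ⁻¹' Set.Ici 0 := by
      intro x hx
      refine ⟨hx.1, ?_⟩
      simp only [Set.mem_preimage, Set.mem_Ici]
      linarith [hx.2]
    have hτmem := hCclosed.closure_subset ((closure_mono hSsub) (csInf_mem_closure hSne hSbdd))
    have hτIcc : τ ∈ Set.Icc T₀ tS := hτmem.1
    have hτge : Real.exp (Real.exp (Real.exp (C₁ * τ + C₂))) ≤ Ω τ := by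
      have h := hτmem.2
      simp only [Set.mem_preimage, Set.mem_Ici] at h
      linarith
    have hτstar : (τ : EReal) < Tstar :=
      lt_of_le_of_lt (by exact_mod_cast hτIcc.2) hltS
    have hleft : ∀ t, T₀ ≤ t → t < τ →
        Ω t ≤ Real.exp (Real.exp (Real.exp (C₁ * t + C₂))) := by
      intro t ht htτ
      by_contra hc
      push_neg at hc
      have hmem : t ∈ S := ⟨⟨ht, htτ.le.trans hτIcc.2⟩, hc⟩
      exact absurd (csInf_le hSbdd hmem) (not_le.mpr htτ)
    have hτ0 : 0 ≤ τ := le_trans hT₀ hτIcc.1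
    have hC₁τ : 0 ≤ C₁ * τ := mul_nonneg hC₁.le hτ0
    have hT₀τ : T₀ < τ := by
      rcases lt_or_eq_of_le hτIcc.1 with h | h
      · exact h
      · exfalso
        have e1 : Real.exp (Real.exp (Real.exp C₂)) ≤
            Real.exp (Real.exp (Real.exp (C₁ * τ + C₂))) :=
          Real.exp_le_exp.mpr (Real.exp_le_exp.mpr (Real.exp_le_exp.mpr (by linarith)))
        have e3 : Ω τ = Ω T₀ := by rw [← h]
        rw [e3] at hτge
        have e4 : Ω T₀ < 2 * R * Ω T₀ := by nlinarith [hΩT₀, hR]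
        linarith only [hτge, hC₂big, e1, e4]
    have hΩτle : Ω τ ≤ Real.exp (Real.exp (Real.exp (C₁ * τ + C₂))) := by
      have hIcoSub : Set.Ico T₀ τ ⊆ Set.Icc T₀ tS := fun x hx =>
        ⟨hx.1, hx.2.le.trans hτIcc.2⟩
      have hneBot : (𝓝[Set.Ico T₀ τ] τ).NeBot := by
        rw [← mem_closure_iff_nhdsWithin_neBot, closure_Ico (ne_of_lt hT₀τ)]
        exact ⟨hT₀τ.le, le_rfl⟩
      have htΩ : Filter.Tendsto Ω (nhdsWithin τ (Set.Ico T₀ τ)) (nhds (Ω τ)) :=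
        (((hcont.mono hIccsub) τ hτIcc).mono hIcoSub)
      have htG : Filter.Tendsto (fun t => Real.exp (Real.exp (Real.exp (C₁ * t + C₂))))
          (nhdsWithin τ (Set.Ico T₀ τ))
          (nhds (Real.exp (Real.exp (Real.exp (C₁ * τ + C₂))))) :=
        (hGcont.tendsto τ).mono_left nhdsWithin_le_nhds
      refine le_of_tendsto_of_tendsto htΩ htG ?_
      filter_upwards [self_mem_nhdsWithin] with x hx
      exact hleft x hx.1 hx.2
    have hτeq : Ω τ = Real.exp (Real.exp (Real.exp (C₁ * τ + C₂))) :=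
      le_antisymm hΩτle hτge
    set y := C₁ * τ + C₂ with hydef
    have hy1 : 1 ≤ y := by rw [hydef]; linarith
    have hyC : C₁ / A ≤ y := by rw [hydef]; linarith
    have hlog1 : Real.log (Ω τ) = Real.exp (Real.exp y) := by
      rw [hτeq, Real.log_exp]
    have hlog2 : Real.log (Real.log (Ω τ)) = Real.exp y := by
      rw [hlog1, Real.log_exp]
    set δ := 1 / (A * (Real.exp y * (Real.exp (Real.exp y) + 1))) with hδdef
    have hδpos : 0 < δ := by positivity
    have hDδ : δ * (A * (Real.exp y * (Real.exp (Real.exp y) + 1))) = 1 := by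
      rw [hδdef]; field_simp
    by_cases hcase : τ - δ < T₀
    · have hk := key T₀ τ le_rfl hT₀τ hτstar ?_
      · have e1 : Real.exp (Real.exp (Real.exp C₂)) ≤ Real.exp (Real.exp (Real.exp y)) :=
          Real.exp_le_exp.mpr (Real.exp_le_exp.mpr (Real.exp_le_exp.mpr (by rw [hydef]; linarith)))
        rw [hτeq] at hk
        linarith [hC₂big, hk, e1]
      · rw [hlog2, hlog1]
        have h1 : τ - T₀ ≤ δ := by linarith
        calc (τ - T₀) * (A * (Real.exp y * (Real.exp (Real.exp y) + 1)))
            ≤ δ * (A * (Real.exp y * (Real.exp (Real.exp y) + 1))) :=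
          mul_le_mul_of_nonneg_right h1 (by positivity)
        _ = 1 := hDδ
    · push_neg at hcase
      have htlt : τ - δ < τ := by linarith
      have hk := key (τ - δ) τ hcase htlt hτstar ?_
      · have hΩδ := hleft (τ - δ) hcase htlt
        have hgap := qg_gap A C₁ y hA hC₁ hy1 hyC
        have hCval : C₁ / (2 * A * Real.exp 1 ^ 2) = Real.log (2 * R) + 1 := by
          rw [hC₁def]
          field_simp
        rw [hCval] at hgap
        have hexparg : C₁ * (τ - δ) + C₂ =
            y - C₁ / (A * (Real.exp y * (Real.exp (Real.exp y) + 1))) := by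
          rw [hδdef, hydef]; ring
        rw [hexparg] at hΩδ
        set w := y - C₁ / (A * (Real.exp y * (Real.exp (Real.exp y) + 1))) with hwdef
        have h2 : Ω τ ≤ 2 * R * Real.exp (Real.exp (Real.exp w)) := by
          calc Ω τ ≤ 2 * R * Ω (τ - δ) := hk
          _ ≤ 2 * R * Real.exp (Real.exp (Real.exp w)) := by nlinarith [hΩδ]
        have h3 : Real.exp (Real.exp (Real.exp w)) * (2 * R * Real.exp 1) ≤
            Real.exp (Real.exp (Real.exp y)) := by
          calc Real.exp (Real.exp (Real.exp w)) * (2 * R * Real.exp 1)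
              = Real.exp (Real.exp (Real.exp w)) * Real.exp (Real.log (2 * R) + 1) := by
                rw [Real.exp_add, Real.exp_log (by linarith)]
          _ ≤ Real.exp (Real.exp (Real.exp w)) *
                Real.exp (Real.exp (Real.exp y) - Real.exp (Real.exp w)) :=
              mul_le_mul_of_nonneg_left (Real.exp_le_exp.mpr hgap) (Real.exp_pos _).le
          _ = Real.exp (Real.exp (Real.exp y)) := by
                rw [← Real.exp_add]; ring_nf
        have he1 : (1:ℝ) < Real.exp 1 := by linarith [qg_two_le_e]
        rw [hτeq] at h2
        have hp : (0:ℝ) < 2 * R * Real.exp (Real.exp (Real.exp w)) := by positivity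
        have hq := mul_pos hp (sub_pos.mpr he1)
        nlinarith [h2, h3, hq]
      · rw [hlog2, hlog1]
        have heq : τ - (τ - δ) = δ := by ring
        rw [heq, hDδ]
  constructor
  · refine ⟨C₁, hC₁, C₂, by linarith, fun t ht hlt => ?_⟩
    have hb := hbound_all t ht hlt
    have hΩt := hΩlb t ht hlt
    have hΩtpos : 0 < Ω t := lt_of_lt_of_le hEpos hΩt
    have h1 : Real.log (Ω t) ≤ Real.exp (Real.exp (C₁ * t + C₂)) := by
      calc Real.log (Ω t) ≤ Real.log (Real.exp (Real.exp (Real.exp (C₁ * t + C₂)))) :=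
        Real.log_le_log hΩtpos hb
      _ = Real.exp (Real.exp (C₁ * t + C₂)) := Real.log_exp _
    have hl1 : Real.exp (Real.exp 1) ≤ Real.log (Ω t) := by
      calc Real.exp (Real.exp 1) = Real.log (Real.exp (Real.exp (Real.exp 1))) :=
        (Real.log_exp _).symm
      _ ≤ Real.log (Ω t) := Real.log_le_log hEpos hΩt
    have hl1pos : 0 < Real.log (Ω t) := lt_of_lt_of_le (Real.exp_pos _) hl1
    have h2 : Real.log (Real.log (Ω t)) ≤ Real.exp (C₁ * t + C₂) := by
      calc Real.log (Real.log (Ω t)) ≤ Real.log (Real.exp (Real.exp (C₁ * t + C₂))) :=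
        Real.log_le_log hl1pos h1
      _ = Real.exp (C₁ * t + C₂) := Real.log_exp _
    have hl2pos : 0 < Real.log (Real.log (Ω t)) := by
      calc (0:ℝ) < Real.exp 1 := Real.exp_pos _
      _ = Real.log (Real.exp (Real.exp 1)) := (Real.log_exp _).symm
      _ ≤ Real.log (Real.log (Ω t)) := Real.log_le_log (Real.exp_pos _) hl1
    calc Real.log (Real.log (Real.log (Ω t))) ≤
        Real.log (Real.exp (C₁ * t + C₂)) := Real.log_le_log hl2pos h2
    _ = C₁ * t + C₂ := Real.log_exp _
  · intro htop
    refine ⟨Real.exp (Real.exp (Real.exp (C₁ * Tstar.toReal + C₂))), fun t ht hlt => ?_⟩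
    have htle : t ≤ Tstar.toReal := by
      have h := EReal.toReal_le_toReal (le_of_lt hlt) (EReal.coe_ne_bot t) (ne_of_lt htop)
      simpa using h
    calc Ω t ≤ Real.exp (Real.exp (Real.exp (C₁ * t + C₂))) := hbound_all t ht hlt
    _ ≤ Real.exp (Real.exp (Real.exp (C₁ * Tstar.toReal + C₂))) := by
        have : C₁ * t ≤ C₁ * Tstar.toReal := mul_le_mul_of_nonneg_left htle hC₁.le
        exact Real.exp_le_exp.mpr (Real.exp_le_exp.mpr (Real.exp_le_exp.mpr (by linarith)))
end

section
/- Quantitative core of Theorem 2 (double exponential bound): Let 0 ≤ T₀ < T⋆ ≤ ∞ and let Ω : [T₀, T⋆) → ℝ be continuous and nondecreasing with Ω(T₀) ≥ e^{e}. Suppose there exist constants R > 1, K > 0 and c_L > 0 such that for all T₀ ≤ t₀ < t₁ < T⋆ there exists λ₀ > 0 satisfying (i) λ₀ ≥ c_L · Ω(t₀) / (R · Ω(t₁)), and (ii) Ω(t) ≤ R · Ω(t₀) · ( 1 + (K/λ₀) · ∫_{t₀}^{t} (log Ω(τ) + 1) dτ ) for every t ∈ [t₀, t₁]. Then there exist constants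 C₁′, C₂′ > 0, depending only on R, K, c_L, T₀ and Ω(T₀), such that log log Ω(t) ≤ C₁′ t + C₂′ for all t ∈ [T₀, T⋆). In particular, if T⋆ < ∞ then Ω is bounded on [T₀, T⋆). -/
/-!
Write `G = log Ω + 1`. Hypothesis (ii) at `t = t₁`, together with (i) and the monotonicity of
`Ω`, gives `Ω(t₁) ≤ R Ω(t₀) + (R² K / c_L) (t₁ - t₀) G(t₁) Ω(t₁)`. So `Ω` grows at most by the
factor `2R`, i.e. `G` by at most `log (2R)`, on every interval `[t₀, t₁]` with
`(t₁ - t₀) G(t₁) ≤ c_L / (2 R² K)`. By continuity, `G` then needs time `≳ 1 / (n + 1)` to climb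
from the level `G(T₀) + 2n log (2R)` to the next one, so it passes the `n`-th level only after
time `≳ harmonic n ≥ log (n + 1)`: `G` grows at most exponentially, and `log log Ω` at most
linearly.
-/

open Real MeasureTheory Set

/-- A discrete form of `g' ≤ (δ / ε) * g`: within time `ε / g` the function `g` rises by at most
`δ`. -/
def GrowthLimitedOn (g : ℝ → ℝ) (s : Set ℝ) (ε δ : ℝ) : Prop :=
  ∀ t₀ ∈ s, ∀ t₁ ∈ s, t₀ < t₁ → (t₁ - t₀) * g t₁ ≤ ε → g t₁ ≤ g t₀ + δ

namespace GrowthLimitedOn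

variable {g : ℝ → ℝ} {s : Set ℝ} {ε δ : ℝ}

theorem le_of_add_lt (h : GrowthLimitedOn g s ε δ) (hs : s.OrdConnected) (hg : ContinuousOn g s)
    (hδ : 0 ≤ δ) {t₀ t₁ M : ℝ} (ht₀ : t₀ ∈ s) (ht₁ : t₁ ∈ s) (hle : t₀ ≤ t₁) (hM₀ : 0 ≤ M)
    (hM : g t₀ + δ < M) (hwidth : (t₁ - t₀) * M ≤ ε) : g t₁ ≤ M := by
  by_contra! hlt
  have hIcc : Icc t₀ t₁ ⊆ s := hs.out ht₀ ht₁
  obtain ⟨t, ht, hgt⟩ :=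
    intermediate_value_Icc hle (hg.mono hIcc) (⟨by linarith, hlt.le⟩ : M ∈ Icc (g t₀) (g t₁))
  have htt₀ : t₀ < t := lt_of_le_of_ne ht.1 (by rintro rfl; linarith)
  have hstep : (t - t₀) * g t ≤ ε := by
    rw [hgt]
    exact (mul_le_mul_of_nonneg_right (by linarith [ht.2]) hM₀).trans hwidth
  linarith [h t₀ ht₀ t (hIcc ht) htt₀ hstep]

variable {a : ℝ}

theorem le_add_of_le_harmonic (h : GrowthLimitedOn g s ε δ) (hs : s.OrdConnected)
    (hg : ContinuousOn g s) (ha : IsLeast s a) (hga : 0 ≤ g a) (hε : 0 < ε) (hδ : 0 < δ) (n : ℕ) :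
    ∀ t ∈ s, t ≤ a + ε / (g a + 2 * δ) * harmonic n → g t ≤ g a + 2 * δ * n := by
  set C := g a + 2 * δ
  have hC : 0 < C := by positivity
  induction n with
  | zero =>
    intro t ht hle
    obtain rfl : t = a := le_antisymm (by simpa using hle) (ha.2 ht)
    simp
  | succ n ih =>
    intro t ht hle
    set τ := a + ε / C * harmonic n
    rcases le_or_gt t τ with htτ | htτ
    · exact (ih t ht htτ).trans (by gcongr; simp)
    have hharm : (0 : ℝ) ≤ harmonic n :=
      (log_nonneg (by simp)).trans (log_add_one_le_harmonic n)
    have haτ : a ≤ τ := le_add_of_nonneg_right (by positivity)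
    have hτ : τ ∈ s := hs.out ha.1 ht ⟨haτ, htτ.le⟩
    have hwidth : t - τ ≤ ε / C * ((n : ℝ) + 1)⁻¹ := by
      simp only [harmonic_succ, Rat.cast_add, Rat.cast_inv, Rat.cast_natCast, Nat.cast_add,
        Nat.cast_one, mul_add] at hle
      linarith
    have hlevel : g a + 2 * δ * (n + 1) ≤ C * (n + 1) := by
      nlinarith [mul_nonneg hga (Nat.cast_nonneg n : (0 : ℝ) ≤ n)]
    push_cast
    refine h.le_of_add_lt hs hg hδ.le hτ ht htτ.le (by positivity)
      (by linarith [ih τ hτ le_rfl]) ?_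
    calc (t - τ) * (g a + 2 * δ * (n + 1)) ≤ ε / C * ((n : ℝ) + 1)⁻¹ * (C * (n + 1)) := by
          gcongr
      _ = ε := by field_simp

theorem le_mul_exp (h : GrowthLimitedOn g s ε δ) (hs : s.OrdConnected) (hg : ContinuousOn g s)
    (ha : IsLeast s a) (hga : 0 ≤ g a) (hε : 0 < ε) (hδ : 0 < δ) {t : ℝ} (ht : t ∈ s) :
    g t ≤ (g a + 2 * δ) * exp ((g a + 2 * δ) / ε * (t - a)) := by
  set C := g a + 2 * δ
  set x := C / ε * (t - a) with hx_def
  have hC : 0 < C := by positivity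
  have hx : 0 ≤ x := mul_nonneg (by positivity) (sub_nonneg.2 (ha.2 ht))
  set n := ⌊exp x⌋₊
  have hxn : x ≤ harmonic n :=
    calc x = log (exp x) := (log_exp x).symm
      _ ≤ log ↑(n + 1) := by
        gcongr
        push_cast
        exact (Nat.lt_floor_add_one _).le
      _ ≤ harmonic n := log_add_one_le_harmonic n
  have htn : t ≤ a + ε / C * harmonic n := by
    have : t - a ≤ ε / C * harmonic n :=
      calc t - a = ε / C * x := by rw [hx_def]; field_simp
        _ ≤ ε / C * harmonic n := by gcongr
    linarith
  calc g t ≤ g a + 2 * δ * n := h.le_add_of_le_harmonic hs hg ha hga hε hδ n t ht htn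
    _ ≤ g a * exp x + 2 * δ * exp x := by
        gcongr
        · exact le_mul_of_one_le_right hga (one_le_exp hx)
        · exact Nat.floor_le (exp_pos x).le
    _ = C * exp x := by ring

end GrowthLimitedOn

theorem le_two_mul_of_le_mul_one_add {R K cL lam x₀ x₁ I : ℝ} (hR : 0 < R) (hK : 0 ≤ K)
    (hcL : 0 < cL) (hx₀ : 0 < x₀) (hx₁ : 0 < x₁) (hlam : cL * x₀ / (R * x₁) ≤ lam) (hI₀ : 0 ≤ I)
    (hI : 2 * R ^ 2 * K * I ≤ cL) (h : x₁ ≤ R * x₀ * (1 + K / lam * I)) : x₁ ≤ 2 * R * x₀ := by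
  have hlam₀ : 0 < lam := lt_of_lt_of_le (by positivity) hlam
  have hlam' : cL * x₀ ≤ lam * (R * x₁) := (div_le_iff₀ (by positivity)).1 hlam
  have hcoef : R * x₀ * (K / lam) ≤ R ^ 2 * K / cL * x₁ := by
    rw [mul_div_assoc', div_le_iff₀ hlam₀, div_mul_eq_mul_div, div_mul_eq_mul_div, le_div_iff₀ hcL]
    nlinarith [mul_le_mul_of_nonneg_left hlam' (mul_nonneg hR.le hK)]
  have hhalf : R ^ 2 * K / cL * x₁ * I ≤ x₁ / 2 := by
    rw [div_mul_eq_mul_div, div_mul_eq_mul_div, div_le_div_iff₀ hcL two_pos]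
    nlinarith [mul_le_mul_of_nonneg_left hI hx₁.le]
  have : x₁ ≤ R * x₀ + x₁ / 2 :=
    calc x₁ ≤ R * x₀ + R * x₀ * (K / lam) * I := by linarith
      _ ≤ R * x₀ + R ^ 2 * K / cL * x₁ * I := by gcongr
      _ ≤ R * x₀ + x₁ / 2 := by linarith
  linarith

theorem growthLimitedOn_log_add_one {Ω : ℝ → ℝ} {s : Set ℝ} {R K cL : ℝ} (hs : s.OrdConnected)
    (hmono : MonotoneOn Ω s) (hΩ : ∀ t ∈ s, 1 ≤ Ω t) (hR : 0 < R) (hK : 0 < K) (hcL : 0 < cL)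
    (hyp : ∀ t₀ ∈ s, ∀ t₁ ∈ s, t₀ < t₁ → ∃ lam > 0, cL * Ω t₀ / (R * Ω t₁) ≤ lam ∧
      Ω t₁ ≤ R * Ω t₀ * (1 + K / lam * ∫ τ in t₀..t₁, (log (Ω τ) + 1))) :
    GrowthLimitedOn (fun t ↦ log (Ω t) + 1) s (cL / (2 * R ^ 2 * K)) (log (2 * R)) := by
  intro t₀ ht₀ t₁ ht₁ hlt hwidth
  obtain ⟨lam, -, hlam, hΩt₁⟩ := hyp t₀ ht₀ t₁ ht₁ hlt
  have hIcc : Icc t₀ t₁ ⊆ s := hs.out ht₀ ht₁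
  have hpos : ∀ t ∈ s, 0 < Ω t := fun t ht ↦ one_pos.trans_le (hΩ t ht)
  have hG : MonotoneOn (fun t ↦ log (Ω t) + 1) (Icc t₀ t₁) := fun x hx y hy hxy ↦
    add_le_add_left (log_le_log (hpos x (hIcc hx)) (hmono (hIcc hx) (hIcc hy) hxy)) 1
  have hI₀ : 0 ≤ ∫ τ in t₀..t₁, (log (Ω τ) + 1) :=
    intervalIntegral.integral_nonneg hlt.le fun τ hτ ↦ by
      linarith [log_nonneg (hΩ τ (hIcc hτ))]
  have hI : ∫ τ in t₀..t₁, (log (Ω τ) + 1) ≤ (t₁ - t₀) * (log (Ω t₁) + 1) := by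
    calc ∫ τ in t₀..t₁, (log (Ω τ) + 1) ≤ ∫ _ in t₀..t₁, (log (Ω t₁) + 1) :=
          intervalIntegral.integral_mono_on hlt.le
            (MonotoneOn.intervalIntegrable (by rwa [uIcc_of_le hlt.le])) intervalIntegrable_const
            fun τ hτ ↦ hG hτ (right_mem_Icc.2 hlt.le) hτ.2
      _ = (t₁ - t₀) * (log (Ω t₁) + 1) := by rw [intervalIntegral.integral_const, smul_eq_mul]
  have hsmall : 2 * R ^ 2 * K * ∫ τ in t₀..t₁, (log (Ω τ) + 1) ≤ cL :=
    calc _ ≤ 2 * R ^ 2 * K * (cL / (2 * R ^ 2 * K)) := by gcongr; exact hI.trans hwidth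
      _ = cL := by field_simp
  have hdouble := le_two_mul_of_le_mul_one_add hR hK.le hcL (hpos t₀ ht₀) (hpos t₁ ht₁) hlam hI₀
    hsmall hΩt₁
  have := log_le_log (hpos t₁ ht₁) hdouble
  rw [log_mul (by positivity) (hpos t₀ ht₀).ne'] at this
  linarith

theorem log_log_le_of_log_le_mul_exp {x C y : ℝ} (hx : 1 < x) (h : log x ≤ C * exp y) :
    log (log x) ≤ log C + y := by
  have hC : 0 < C := pos_of_mul_pos_left ((log_pos hx).trans_le h) (exp_pos y).le
  calc log (log x) ≤ log (C * exp y) := log_le_log (log_pos hx) h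
    _ = log C + y := by rw [log_mul hC.ne' (exp_pos y).ne', log_exp]

theorem le_exp_exp_of_log_log_le {x L : ℝ} (hx : 1 < x) (h : log (log x) ≤ L) :
    x ≤ exp (exp L) := by
  rwa [← log_le_iff_le_exp (one_pos.trans hx), ← log_le_iff_le_exp (log_pos hx)]

/-- Quantitative core of Theorem 2 (double exponential bound). -/
theorem qg_double_exponential_bound
    (T₀ : ℝ) (Tstar : EReal) (hT₀ : 0 ≤ T₀) (hTT : (T₀ : EReal) < Tstar)
    (Ω : ℝ → ℝ)
    (hcont : ContinuousOn Ω {t : ℝ | T₀ ≤ t ∧ (t : EReal) < Tstar})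
    (hmono : ∀ s t : ℝ, T₀ ≤ s → s ≤ t → (t : EReal) < Tstar → Ω s ≤ Ω t)
    (hbig : Real.exp (Real.exp 1) ≤ Ω T₀)
    (R K cL : ℝ) (hR : 1 < R) (hK : 0 < K) (hcL : 0 < cL)
    (hyp : ∀ t₀ t₁ : ℝ, T₀ ≤ t₀ → t₀ < t₁ → (t₁ : EReal) < Tstar →
      ∃ lam₀ > 0,
        cL * Ω t₀ / (R * Ω t₁) ≤ lam₀ ∧
        ∀ t ∈ Set.Icc t₀ t₁,
          Ω t ≤ R * Ω t₀ *
            (1 + (K / lam₀) * ∫ τ in t₀..t, (Real.log (Ω τ) + 1))) :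
    (∃ C₁ > 0, ∃ C₂ > 0, ∀ t : ℝ, T₀ ≤ t → (t : EReal) < Tstar →
        Real.log (Real.log (Ω t)) ≤ C₁ * t + C₂) ∧
    (Tstar < ⊤ → ∃ M : ℝ, ∀ t : ℝ, T₀ ≤ t → (t : EReal) < Tstar → Ω t ≤ M) := by
  set s := {t : ℝ | T₀ ≤ t ∧ (t : EReal) < Tstar}
  have hs : s.OrdConnected :=
    ⟨fun _ hx _ hy _ hz ↦ ⟨hx.1.trans hz.1, (EReal.coe_le_coe_iff.2 hz.2).trans_lt hy.2⟩⟩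
  have ha : IsLeast s T₀ := ⟨⟨le_rfl, hTT⟩, fun _ ht ↦ ht.1⟩
  have hmono' : MonotoneOn Ω s := fun x hx _ hy hxy ↦ hmono x _ hx.1 hxy hy.2
  have hΩ : ∀ t ∈ s, 1 < Ω t := fun t ht ↦
    (one_lt_exp_iff.2 (exp_pos 1)).trans_le (hbig.trans (hmono' ha.1 ht (ha.2 ht)))
  have hgrowth := growthLimitedOn_log_add_one hs hmono' (fun t ht ↦ (hΩ t ht).le) (by linarith)
    hK hcL fun t₀ ht₀ t₁ ht₁ hlt ↦ (hyp t₀ t₁ ht₀.1 hlt ht₁.2).imp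
      fun _ ⟨hlam, hlow, hup⟩ ↦ ⟨hlam, hlow, hup t₁ (right_mem_Icc.2 hlt.le)⟩
  have hG : ContinuousOn (fun t ↦ log (Ω t) + 1) s :=
    (hcont.log fun t ht ↦ (one_pos.trans (hΩ t ht)).ne').add continuousOn_const
  have hδ : 0 < log (2 * R) := log_pos (by linarith)
  have hlogT₀ : 0 < log (Ω T₀) := log_pos (hΩ T₀ ha.1)
  set C := log (Ω T₀) + 1 + 2 * log (2 * R)
  set D := C / (cL / (2 * R ^ 2 * K))
  have hD : 0 < D := by positivity
  have hbound : ∀ t ∈ s, log (log (Ω t)) ≤ D * t + log C := fun t ht ↦ by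
    have hexp : log (Ω t) + 1 ≤ C * exp (D * (t - T₀)) :=
      hgrowth.le_mul_exp hs hG ha (by positivity) (by positivity) hδ ht
    have hloglog := log_log_le_of_log_le_mul_exp (hΩ t ht) (by linarith : log (Ω t) ≤ C * _)
    linarith [mul_nonneg hD.le hT₀, mul_sub D t T₀]
  refine ⟨⟨D, hD, log C, log_pos (by linarith), fun t ht htT ↦ hbound t ⟨ht, htT⟩⟩, fun hfin ↦
    ⟨exp (exp (D * Tstar.toReal + log C)), fun t ht htT ↦
      le_exp_exp_of_log_log_le (hΩ t ⟨ht, htT⟩) ((hbound t ⟨ht, htT⟩).trans ?_)⟩⟩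
  gcongr
  exact EReal.coe_le_coe_iff.1 (htT.le.trans (EReal.le_coe_toReal hfin.ne))
end

section
/- Arc-length stretching equals gradient ratio (Lemma 4.2): Under the transport setup, fix times t₀ ≤ t and let γ : I → ℝ² be a C¹ curve (a level-set segment of θ(·, t₀) parametrized by arc length) with γ′(β) = ξ(γ(β), t₀) and ∇^⊥θ(γ(β), t₀) ≠ 0 for all β ∈ I. Then for every β ∈ I, ‖∂_β [X(γ(β), t₀, t)]‖ = ‖∇^⊥θ(X(γ(β), t₀, t), t)‖ / ‖∇^⊥θ(γ(β), t₀)‖; that is, the local arc-length stretching factor ∂s/∂β of the transported level set equals the ratio of the magnitudes of ∇^⊥θ at the transported point and at the initial point. -/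
noncomputable section
open Real

/-- The plane, with its Euclidean structure. -/
abbrev E2 := EuclideanSpace ℝ (Fin 2)

/-- `v^⊥ = (-v₂, v₁)`. -/
def perp (v : E2) : E2 := (WithLp.equiv 2 (Fin 2 → ℝ)).symm ![-(v 1), v 0]

/-- The perpendicular spatial gradient `∇^⊥θ(x,t) = (-∂θ/∂x₂, ∂θ/∂x₁)`. -/
def perpGrad (θ : E2 → ℝ → ℝ) (t : ℝ) (x : E2) : E2 :=
  perp (gradient (fun y => θ y t) x)

/-- The unit direction field `ξ = ∇^⊥θ / ‖∇^⊥θ‖` (where `∇^⊥θ ≠ 0`). -/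
def xi (θ : E2 → ℝ → ℝ) (t : ℝ) (x : E2) : E2 :=
  ‖perpGrad θ t x‖⁻¹ • perpGrad θ t x

/-!
Since `θ` is constant along trajectories, `θ(·, t₀) = θ(X(·, t₀, t), t)`, and the chain rule gives
`∇θ(·, t₀) = Aᵀ ∇θ(X, t)` with `A = ∇_α X`. As `det A = 1`, `A J Aᵀ = J` for the rotation `J`, so
`A ∇^⊥θ(·, t₀) = ∇^⊥θ(X, t)`: the flow transports `∇^⊥θ`. Hence the velocity of `β ↦ X(γ β, t₀, t)`
is `A ξ = ∇^⊥θ(X, t) / ‖∇^⊥θ(γ β, t₀)‖`.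
-/

open scoped RealInnerProductSpace

@[simp] lemma perp_apply_zero (v : E2) : perp v 0 = -v 1 := rfl

@[simp] lemma perp_apply_one (v : E2) : perp v 1 = v 0 := rfl

lemma inner_eq_fin_two (x y : E2) : ⟪x, y⟫ = x 0 * y 0 + x 1 * y 1 := by
  simp [PiLp.inner_apply, Fin.sum_univ_two, mul_comm]

lemma eq_smul_single_add_smul_single (v : E2) :
    v = v 0 • EuclideanSpace.single 0 1 + v 1 • EuclideanSpace.single 1 1 := by
  ext i; fin_cases i <;> simp

lemma ContinuousLinearMap.det_eq_fin_two (A : E2 →L[ℝ] E2) :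
    A.det = A (EuclideanSpace.single 0 1) 0 * A (EuclideanSpace.single 1 1) 1
      - A (EuclideanSpace.single 1 1) 0 * A (EuclideanSpace.single 0 1) 1 := by
  rw [ContinuousLinearMap.det,
    ← LinearMap.det_toMatrix (EuclideanSpace.basisFun (Fin 2) ℝ).toBasis, Matrix.det_fin_two]
  simp [LinearMap.toMatrix_apply]

-- In matrix form: `A J Aᵀ = (det A) J` for the rotation `J` by a right angle.
lemma apply_perp_of_inner_apply_eq (A : E2 →L[ℝ] E2) (hA : A.det = 1) {w₀ w : E2}
    (h : ∀ v, ⟪w, A v⟫ = ⟪w₀, v⟫) : A (perp w₀) = perp w := by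
  rw [A.det_eq_fin_two] at hA
  set e₀ : E2 := EuclideanSpace.single 0 1
  set e₁ : E2 := EuclideanSpace.single 1 1
  have hw₀ : w₀ 0 = w 0 * A e₀ 0 + w 1 * A e₀ 1 := by
    simpa [inner_eq_fin_two, e₀] using (h e₀).symm
  have hw₁ : w₀ 1 = w 0 * A e₁ 0 + w 1 * A e₁ 1 := by
    simpa [inner_eq_fin_two, e₁] using (h e₁).symm
  rw [eq_smul_single_add_smul_single (perp w₀), map_add, map_smul, map_smul]
  ext i
  revert i
  simp only [Fin.forall_fin_two, perp_apply_zero, perp_apply_one, PiLp.add_apply,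
    PiLp.smul_apply, smul_eq_mul, hw₀, hw₁]
  constructor
  · linear_combination (-w 1) * hA
  · linear_combination w 0 * hA

section Transport

variable {E F : Type*} [NormedAddCommGroup E] [NormedSpace ℝ E]
  [NormedAddCommGroup F] [NormedSpace ℝ F]

lemma DifferentiableAt.slice_left {f : E → ℝ → F} {x : E} {s : ℝ}
    (hf : DifferentiableAt ℝ (fun p : E × ℝ => f p.1 p.2) (x, s)) :
    DifferentiableAt ℝ (fun y => f y s) x :=
  hf.fun_comp' (f := fun y => (y, s)) x (differentiableAt_id.prodMk (differentiableAt_const s))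

lemma hasDerivAt_comp_curve {f : E → ℝ → F} {c : ℝ → E} {c' : E} {s : ℝ}
    (hf : DifferentiableAt ℝ (fun p : E × ℝ => f p.1 p.2) (c s, s)) (hc : HasDerivAt c c' s) :
    HasDerivAt (fun r => f (c r) r)
      (fderiv ℝ (fun y => f y s) (c s) c' + deriv (f (c s)) s) s := by
  set D := fderiv ℝ (fun p : E × ℝ => f p.1 p.2) (c s, s)
  have hD : HasFDerivAt (fun p : E × ℝ => f p.1 p.2) D (c s, s) := hf.hasFDerivAt
  have hspace : fderiv ℝ (fun y => f y s) (c s) = D.comp ((ContinuousLinearMap.id ℝ E).prod 0) :=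
    (hD.comp (f := fun y => (y, s)) (c s)
      ((hasFDerivAt_id (c s)).prodMk (hasFDerivAt_const s (c s)))).fderiv
  have htime : deriv (f (c s)) s = D (0, 1) :=
    (hD.comp_hasDerivAt s ((hasDerivAt_const s (c s)).prodMk (hasDerivAt_id s))).deriv
  have hsplit : D (c', 1) = D (c', 0) + D (0, 1) := by rw [← map_add]; simp
  have hcomp : HasDerivAt (fun r => f (c r) r) (D (c', 1)) s :=
    hD.comp_hasDerivAt (f := fun r => (c r, r)) s (hc.prodMk (hasDerivAt_id s))
  rw [hspace, htime]
  simpa [hsplit] using hcomp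

lemma apply_flow_eq_of_transport {u : E → ℝ → E} {θ : E → ℝ → ℝ} {X : E → ℝ → ℝ → E}
    (hθ : Differentiable ℝ (fun p : E × ℝ => θ p.1 p.2))
    (htrans : ∀ x t, HasDerivAt (fun s => θ x s) (-(fderiv ℝ (fun y => θ y t) x (u x t))) t)
    (hflow : ∀ α τ t, HasDerivAt (fun s => X α τ s) (u (X α τ t) t) t)
    (hinit : ∀ α τ, X α τ τ = α) (α : E) (τ t : ℝ) :
    θ (X α τ t) t = θ α τ := by
  have hderiv : ∀ s, HasDerivAt (fun r => θ (X α τ r) r) 0 s := fun s => by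
    simpa [(htrans _ s).deriv] using hasDerivAt_comp_curve (hθ _) (hflow α τ s)
  have := is_const_of_deriv_eq_zero (fun s => (hderiv s).differentiableAt)
    (fun s => (hderiv s).deriv) t τ
  rwa [hinit] at this

end Transport

lemma inner_gradient_fderiv_apply_of_comp_eq {F G : Type*}
    [NormedAddCommGroup F] [InnerProductSpace ℝ F] [CompleteSpace F]
    [NormedAddCommGroup G] [InnerProductSpace ℝ G] [CompleteSpace G]
    {g : G → ℝ} {Φ : F → G} {f : F → ℝ} {x : F} (hcomp : (fun y => g (Φ y)) = f)
    (hg : DifferentiableAt ℝ g (Φ x)) (hΦ : DifferentiableAt ℝ Φ x) (v : F) :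
    ⟪gradient g (Φ x), fderiv ℝ Φ x v⟫ = ⟪gradient f x, v⟫ := by
  rw [inner_gradient_left, inner_gradient_left, ← hcomp, fderiv_fun_comp x hg hΦ]
  rfl

lemma fderiv_flow_apply_perpGrad {u : E2 → ℝ → E2} {θ : E2 → ℝ → ℝ} {X : E2 → ℝ → ℝ → E2}
    (hθ : Differentiable ℝ (fun p : E2 × ℝ => θ p.1 p.2))
    (htrans : ∀ x t, HasDerivAt (fun s => θ x s) (-(fderiv ℝ (fun y => θ y t) x (u x t))) t)
    (hflow : ∀ α τ t, HasDerivAt (fun s => X α τ s) (u (X α τ t) t) t)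
    (hinit : ∀ α τ, X α τ τ = α) {τ t : ℝ} (hX : Differentiable ℝ (fun α => X α τ t))
    {x : E2} (hdet : (fderiv ℝ (fun a => X a τ t) x).det = 1) :
    fderiv ℝ (fun a => X a τ t) x (perpGrad θ τ x) = perpGrad θ t (X x τ t) :=
  apply_perp_of_inner_apply_eq _ hdet <|
    inner_gradient_fderiv_apply_of_comp_eq
      (funext fun α => apply_flow_eq_of_transport hθ htrans hflow hinit α τ t)
      ((hθ _).slice_left) (hX x)

theorem arcLength_stretching_eq_gradient_ratio_general
    (u : E2 → ℝ → E2) (θ : E2 → ℝ → ℝ) (X : E2 → ℝ → ℝ → E2)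
    (hθ : ContDiff ℝ 1 (fun p : E2 × ℝ => θ p.1 p.2))
    -- θ solves the transport equation ∂ₜθ + u·∇θ = 0
    (htrans : ∀ x : E2, ∀ t : ℝ,
      HasDerivAt (fun s => θ x s) (-(fderiv ℝ (fun y => θ y t) x (u x t))) t)
    -- X is the flow map of u
    (hflow : ∀ α : E2, ∀ τ t : ℝ,
      HasDerivAt (fun s => X α τ s) (u (X α τ t) t) t)
    (hinit : ∀ α : E2, ∀ τ : ℝ, X α τ τ = α)
    -- X is C¹ in α, with Jacobian of determinant 1 (incompressibility)
    (hXC1 : ∀ τ t : ℝ, ContDiff ℝ 1 (fun α => X α τ t))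
    (hdet : ∀ α : E2, ∀ τ t : ℝ, (fderiv ℝ (fun a => X a τ t) α).det = 1)
    -- two fixed times and a level-set segment of θ(·,t₀) parametrized by arc length
    (t₀ t : ℝ) (I : Set ℝ) (γ : ℝ → E2)
    (hγ : ∀ β ∈ I, HasDerivAt γ (xi θ t₀ (γ β)) β) :
    ∀ β ∈ I,
      ‖deriv (fun b => X (γ b) t₀ t) β‖ =
        ‖perpGrad θ t (X (γ β) t₀ t)‖ / ‖perpGrad θ t₀ (γ β)‖ := by
  intro β hβ
  have hX : Differentiable ℝ (fun α => X α t₀ t) := (hXC1 t₀ t).differentiable one_ne_zero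
  have hcurve : HasDerivAt (fun b => X (γ b) t₀ t) _ β :=
    (hX (γ β)).hasFDerivAt.comp_hasDerivAt β (hγ β hβ)
  rw [hcurve.deriv, xi, map_smul,
    fderiv_flow_apply_perpGrad (hθ.differentiable one_ne_zero) htrans hflow hinit hX (hdet _ _ _),
    norm_smul, norm_inv, norm_norm, div_eq_inv_mul]

/-- Arc-length stretching equals gradient ratio (Lemma 4.2):
for a level-set segment `γ` of `θ(·,t₀)` parametrized by arc length,
`‖∂_β X(γ(β),t₀,t)‖ = ‖∇^⊥θ(X(γ(β),t₀,t),t)‖ / ‖∇^⊥θ(γ(β),t₀)‖`. -/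
theorem arcLength_stretching_eq_gradient_ratio
    (u : E2 → ℝ → E2) (θ : E2 → ℝ → ℝ) (X : E2 → ℝ → ℝ → E2)
    (hu : ContDiff ℝ 1 (fun p : E2 × ℝ => u p.1 p.2))
    (hθ : ContDiff ℝ 1 (fun p : E2 × ℝ => θ p.1 p.2))
    -- θ solves the transport equation ∂ₜθ + u·∇θ = 0
    (htrans : ∀ x : E2, ∀ t : ℝ,
      HasDerivAt (fun s => θ x s) (-(fderiv ℝ (fun y => θ y t) x (u x t))) t)
    -- X is the flow map of u
    (hflow : ∀ α : E2, ∀ τ t : ℝ,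
      HasDerivAt (fun s => X α τ s) (u (X α τ t) t) t)
    (hinit : ∀ α : E2, ∀ τ : ℝ, X α τ τ = α)
    -- X is C¹ in α, with Jacobian of determinant 1 (incompressibility)
    (hXC1 : ∀ τ t : ℝ, ContDiff ℝ 1 (fun α => X α τ t))
    (hdet : ∀ α : E2, ∀ τ t : ℝ, (fderiv ℝ (fun a => X a τ t) α).det = 1)
    -- two fixed times and a level-set segment of θ(·,t₀) parametrized by arc length
    (t₀ t : ℝ) (ht : t₀ ≤ t) (I : Set ℝ) (γ : ℝ → E2)
    (hγ : ∀ β ∈ I, HasDerivAt γ (xi θ t₀ (γ β)) β)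
    (hnz : ∀ β ∈ I, perpGrad θ t₀ (γ β) ≠ 0) :
    ∀ β ∈ I,
      ‖deriv (fun b => X (γ b) t₀ t) β‖ =
        ‖perpGrad θ t (X (γ β) t₀ t)‖ / ‖perpGrad θ t₀ (γ β)‖ :=
  arcLength_stretching_eq_gradient_ratio_general u θ X hθ htrans hflow hinit hXC1 hdet t₀ t I γ hγ
end
end

section
/- Exponential representation of |w| along a level curve (Lemma 4.3, equation (4.14)): Let w : ℝ² → ℝ² be a C¹ vector field with ∇·w = 0, let γ : [0, S] → ℝ² be a C¹ curve with γ′(s) = ξ(γ(s)) for all s, where ξ = w/‖w‖, and suppose w(γ(s)) ≠ 0 for all s ∈ [0, S]. Then ‖w(γ(S))‖ = ‖w(γ(0))‖ · exp( − ∫₀^S (∇·ξ)(γ(s)) ds ). In particular, setting m = sup_{s ∈ [0,S]} |(∇·ξ)(γ(s))|, one has e^{−mS} ‖w(γ(0))‖ ≤ ‖w(γ(S))‖ ≤ e^{mS} ‖w(γ(0))‖, so the maximum of ‖w‖ over the curve is at most e^{mS} times its minimum over the curve. -/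
noncomputable section
open Real

/-- The divergence `∇·w = ∂₁w₁ + ∂₂w₂` of a planar vector field. -/
def divergence (w : E2 → E2) (x : E2) : ℝ :=
  ∑ i : Fin 2, (fderiv ℝ w x (EuclideanSpace.single i 1)) i

/-- The unit direction field `ξ = w/‖w‖` (where `w ≠ 0`). -/
def xiOf (w : E2 → E2) (x : E2) : E2 := ‖w x‖⁻¹ • w x

/-! Along an integral curve of `ξ = w/‖w‖`, `d/ds log ‖w(γ s)‖ = ⟪w, Dw w⟫/‖w‖³`.
Differentiating `ξ = w/‖w‖` gives `∇·ξ = ‖w‖⁻¹ ∇·w - ⟪w, Dw w⟫/‖w‖³`, the last term being the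
trace of a rank-one map. So when `∇·w = 0`, `log ‖w(γ s)‖` has derivative `-(∇·ξ)(γ s)` and the
formula is the fundamental theorem of calculus, applied between any two parameters; the bounds
then come from `|∫ₐᵇ ∇·ξ| ≤ m S`. -/

open scoped RealInnerProductSpace

section InnerProductSpace

variable {F : Type*} [NormedAddCommGroup F] [InnerProductSpace ℝ F] {v : F}

theorem hasFDerivAt_norm_of_ne_zero (hv : v ≠ 0) :
    HasFDerivAt (fun x : F => ‖x‖) (‖v‖⁻¹ • innerSL ℝ v) v := by
  have hsq : (fun x : F => √(‖x‖ ^ 2)) = fun x => ‖x‖ := by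
    funext x; exact sqrt_sq (norm_nonneg x)
  have h := (hasStrictFDerivAt_norm_sq v).hasFDerivAt.sqrt (by positivity)
  rw [hsq, sqrt_sq (norm_nonneg v)] at h
  convert h using 1
  ext u
  simp only [smul_apply, coe_innerSL_apply, smul_eq_mul, one_div, mul_inv_rev, nsmul_eq_mul,
    Nat.cast_ofNat]
  field_simp

theorem hasFDerivAt_inv_norm_smul_self (hv : v ≠ 0) :
    HasFDerivAt (fun x : F => ‖x‖⁻¹ • x)
      (‖v‖⁻¹ • ContinuousLinearMap.id ℝ F - (‖v‖ ^ 3)⁻¹ • (innerSL ℝ v).smulRight v) v := by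
  have hn : ‖v‖ ≠ 0 := norm_ne_zero_iff.mpr hv
  have h := ((hasDerivAt_inv hn).comp_hasFDerivAt v (hasFDerivAt_norm_of_ne_zero hv)).smul
    (hasFDerivAt_id v)
  refine h.congr_fderiv ?_
  ext u
  simp only [Function.comp_apply, smul_smul, neg_mul, neg_smul, id_eq, add_apply, smul_apply,
    ContinuousLinearMap.id_apply, ContinuousLinearMap.smulRight_apply, neg_apply, coe_innerSL_apply,
    smul_eq_mul, sub_apply]
  module

end InnerProductSpace

theorem LinearMap.trace_smulRight_comp {R M : Type*} [CommRing R] [AddCommGroup M] [Module R M]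
    [Module.Free R M] [Module.Finite R M] (f : M →ₗ[R] R) (v : M) (g : M →ₗ[R] M) :
    LinearMap.trace R M (f.smulRight v ∘ₗ g) = f (g v) :=
  LinearMap.trace_smulRight (f ∘ₗ g) v

open MeasureTheory Set

theorem eq_mul_exp_integral_of_hasDerivAt_log {F g : ℝ → ℝ} {a b : ℝ} (ha : 0 < F a) (hb : 0 < F b)
    (hderiv : ∀ s ∈ uIcc a b, HasDerivAt (fun t => log (F t)) (g s) s)
    (hg : IntervalIntegrable g volume a b) :
    F b = F a * exp (∫ s in a..b, g s) := by
  rw [intervalIntegral.integral_eq_sub_of_hasDerivAt hderiv hg, exp_sub, exp_log ha, exp_log hb]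
  field_simp

theorem abs_intervalIntegral_le_of_abs_le {g : ℝ → ℝ} {l u m a b : ℝ}
    (hm : ∀ s ∈ Icc l u, |g s| ≤ m) (ha : a ∈ Icc l u) (hb : b ∈ Icc l u) :
    |∫ s in a..b, g s| ≤ m * (u - l) := by
  have hm0 : 0 ≤ m := (abs_nonneg _).trans (hm a ha)
  calc |∫ s in a..b, g s| = ‖∫ s in a..b, g s‖ := (Real.norm_eq_abs _).symm
    _ ≤ m * |b - a| :=
        intervalIntegral.norm_integral_le_of_norm_le_const fun s hs =>
          hm s (uIcc_subset_Icc ha hb (uIoc_subset_uIcc hs))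
    _ ≤ m * (u - l) := by
        gcongr
        exact Real.dist_le_of_mem_Icc hb ha

theorem divergence_eq_trace (w : E2 → E2) (x : E2) :
    divergence w x = LinearMap.trace ℝ E2 (fderiv ℝ w x) := by
  rw [LinearMap.trace_eq_sum_inner _ (EuclideanSpace.basisFun (Fin 2) ℝ)]
  simp [divergence, EuclideanSpace.inner_single_left]

theorem continuous_divergence {w : E2 → E2} (hw : ContDiff ℝ 1 w) : Continuous (divergence w) := by
  unfold divergence
  fun_prop

theorem divergence_xiOf {w : E2 → E2} {x : E2} (hw : DifferentiableAt ℝ w x) (hx : w x ≠ 0) :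
    divergence (xiOf w) x =
      ‖w x‖⁻¹ * divergence w x - (‖w x‖ ^ 3)⁻¹ * ⟪w x, fderiv ℝ w x (w x)⟫ := by
  have h : HasFDerivAt (xiOf w) _ x := (hasFDerivAt_inv_norm_smul_self hx).comp x hw.hasFDerivAt
  rw [divergence_eq_trace, divergence_eq_trace, h.fderiv]
  simp [LinearMap.trace_smulRight_comp]

theorem continuousOn_divergence_xiOf {w : E2 → E2} (hw : ContDiff ℝ 1 w) :
    ContinuousOn (divergence (xiOf w)) {x | w x ≠ 0} := by
  have hwc : Continuous w := hw.continuous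
  have hDw : Continuous (fderiv ℝ w) := hw.continuous_fderiv one_ne_zero
  have hdiv : Continuous (divergence w) := continuous_divergence hw
  refine ContinuousOn.congr ?_ fun x hx => divergence_xiOf (hw.differentiable one_ne_zero x) hx
  fun_prop (disch := intro x hx; simpa using hx)

theorem hasDerivAt_log_norm_along_xiOf {w : E2 → E2} {γ : ℝ → E2} {s : ℝ}
    (hw : DifferentiableAt ℝ w (γ s)) (hγ : HasDerivAt γ (xiOf w (γ s)) s)
    (hx : w (γ s) ≠ 0) (hdiv : divergence w (γ s) = 0) :
    HasDerivAt (fun t => log ‖w (γ t)‖) (-divergence (xiOf w) (γ s)) s := by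
  have hu := (hasFDerivAt_norm_of_ne_zero hx).comp_hasDerivAt s
    (hw.hasFDerivAt.comp_hasDerivAt s hγ)
  refine (hu.log (norm_ne_zero_iff.mpr hx)).congr_deriv ?_
  rw [divergence_xiOf hw hx, hdiv, xiOf]
  simp only [map_smul, smul_apply, coe_innerSL_apply, smul_eq_mul,
    Function.comp_apply, mul_zero, zero_sub, neg_neg]
  field_simp

theorem norm_comp_eq_mul_exp_integral_divergence_xiOf {w : E2 → E2} {γ : ℝ → E2} {a b : ℝ}
    (hw : ContDiff ℝ 1 w) (hγ : ∀ s ∈ uIcc a b, HasDerivAt γ (xiOf w (γ s)) s)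
    (hnz : ∀ s ∈ uIcc a b, w (γ s) ≠ 0) (hdiv : ∀ s ∈ uIcc a b, divergence w (γ s) = 0) :
    ‖w (γ b)‖ = ‖w (γ a)‖ * exp (-∫ s in a..b, divergence (xiOf w) (γ s)) := by
  have hcont : ContinuousOn (fun s => divergence (xiOf w) (γ s)) (uIcc a b) :=
    (continuousOn_divergence_xiOf hw).comp
      (fun s hs => (hγ s hs).continuousAt.continuousWithinAt) hnz
  rw [← intervalIntegral.integral_neg]
  exact eq_mul_exp_integral_of_hasDerivAt_log (F := fun t => ‖w (γ t)‖)
    (norm_pos_iff.mpr (hnz a left_mem_uIcc)) (norm_pos_iff.mpr (hnz b right_mem_uIcc))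
    (fun s hs => hasDerivAt_log_norm_along_xiOf (hw.differentiable one_ne_zero _) (hγ s hs)
      (hnz s hs) (hdiv s hs))
    hcont.neg.intervalIntegrable

/-- Exponential representation of `‖w‖` along a level curve (Lemma 4.3, eq. (4.14)):
along an arc-length parametrized integral curve `γ` of `ξ = w/‖w‖`,
`‖w(γ(S))‖ = ‖w(γ(0))‖ exp(-∫₀^S (∇·ξ)(γ(s)) ds)`; in particular, if
`|∇·ξ| ≤ m` on the curve then `e^{-mS}‖w(γ(0))‖ ≤ ‖w(γ(S))‖ ≤ e^{mS}‖w(γ(0))‖`,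
and the maximum of `‖w‖` over the curve is at most `e^{mS}` times its minimum. -/
theorem norm_along_level_curve_exponential
    (w : E2 → E2) (hw : ContDiff ℝ 1 w)
    (hdiv : ∀ y : E2, divergence w y = 0)
    (S : ℝ) (hS : 0 ≤ S) (γ : ℝ → E2)
    (hγ : ∀ s ∈ Set.Icc 0 S, HasDerivAt γ (xiOf w (γ s)) s)
    (hnz : ∀ s ∈ Set.Icc 0 S, w (γ s) ≠ 0) :
    ‖w (γ S)‖ = ‖w (γ 0)‖ *
        Real.exp (-∫ s in (0:ℝ)..S, divergence (xiOf w) (γ s)) ∧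
    ∀ m : ℝ, (∀ s ∈ Set.Icc 0 S, |divergence (xiOf w) (γ s)| ≤ m) →
      (Real.exp (-(m * S)) * ‖w (γ 0)‖ ≤ ‖w (γ S)‖ ∧
       ‖w (γ S)‖ ≤ Real.exp (m * S) * ‖w (γ 0)‖ ∧
       ∀ s₁ ∈ Set.Icc 0 S, ∀ s₂ ∈ Set.Icc 0 S,
         ‖w (γ s₁)‖ ≤ Real.exp (m * S) * ‖w (γ s₂)‖) := by
  have hrep : ∀ a ∈ Icc 0 S, ∀ b ∈ Icc 0 S, ‖w (γ b)‖ =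
      ‖w (γ a)‖ * exp (-∫ s in a..b, divergence (xiOf w) (γ s)) := fun a ha b hb =>
    have hsub := uIcc_subset_Icc ha hb
    norm_comp_eq_mul_exp_integral_divergence_xiOf hw (fun s hs => hγ s (hsub hs))
      (fun s hs => hnz s (hsub hs)) (fun s _ => hdiv (γ s))
  have h0 : (0 : ℝ) ∈ Icc 0 S := left_mem_Icc.mpr hS
  have hS' : S ∈ Icc 0 S := right_mem_Icc.mpr hS
  refine ⟨hrep 0 h0 S hS', fun m hm => ?_⟩
  have hcompare : ∀ s₁ ∈ Icc 0 S, ∀ s₂ ∈ Icc 0 S,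
      ‖w (γ s₁)‖ ≤ exp (m * S) * ‖w (γ s₂)‖ := by
    intro s₁ h₁ s₂ h₂
    rw [hrep s₂ h₂ s₁ h₁, mul_comm]
    gcongr
    exact (neg_le_abs _).trans
      (by simpa only [sub_zero] using abs_intervalIntegral_le_of_abs_le hm h₂ h₁)
  refine ⟨?_, hcompare S hS' 0 h0, hcompare⟩
  rw [exp_neg, inv_mul_le_iff₀ (exp_pos _)]
  exact hcompare 0 h0 S hS'
end
end
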